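/- Let n ∈ ℕ^q and m ∈ ℕ^{p−q} be such that n⊔m ∈ ℕ^p is near the diagonal and m is on the step-line, and set N = |n| + |m|. Let A_1, …, A_q and B_1, …, B_{p−q} be real polynomials with deg A_j ≤ n_j − 1 and deg B_j ≤ m_j − 1, and set F(x) = Σ_{j=1}^q A_j(x) w_j(x) + Σ_{j=1}^{p−q} B_j(x) v_j(x). If ∫₀^∞ F(x) x^k dx = 0 for k = 0, 1, …, N − 2, then there exists a constant c ∈ ℝ such that for every real s > 1, ∫₀^∞ F(x) x^{s−1} dx = c · (Γ(s+a)/Γ(s+b+n)) · (1−s)_{N−1}. -/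

import Mathlib

/-!
Expanding `A_j` and `B_j` in monomials, the Mellin transform of `F` at `s` is a combination of
the Mellin transforms of the weights at the shifts `s + k`. Pulling the common factor
`Γ(s+a)/Γ(s+b+n)` out of each shifted Gamma ratio leaves a product of Pochhammer symbols in `s`,
so the transform equals `Γ(s+a)/Γ(s+b+n) · P(s)` for a polynomial `P`. Near-diagonality and the
step-line condition bound `deg P ≤ N - 1`. The orthogonality conditions say that the transform
vanishes at `s = 1, …, N - 1`, where the Gamma factor is positive, so these are the `N - 1` roots
of `P`, and `P(s)` is a multiple of `(1 - s)_{N-1}`.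
-/

open MeasureTheory Finset Polynomial Set

lemma Polynomial.eval_eq_sum_range_of_degree_lt {R : Type*} [Semiring R] {Q : R[X]} {d : ℕ}
    (hQ : Q.degree < d) (x : R) : Q.eval x = ∑ k ∈ range d, Q.coeff k * x ^ k := by
  rcases eq_or_ne Q 0 with rfl | hQ0
  · simp
  · exact eval_eq_sum_range' ((natDegree_lt_iff_degree_lt hQ0).2 hQ) x

lemma Real.rpow_le_rpow_add_rpow {x s σ₁ σ₂ : ℝ} (hx : 0 < x) (h₁ : σ₁ ≤ s) (h₂ : s ≤ σ₂) :
    x ^ s ≤ x ^ σ₁ + x ^ σ₂ := by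
  rcases le_total 1 x with hx1 | hx1
  · exact (Real.rpow_le_rpow_of_exponent_le hx1 h₂).trans
      (le_add_of_nonneg_left (Real.rpow_nonneg hx.le _))
  · exact (Real.rpow_le_rpow_of_exponent_ge hx hx1 h₁).trans
      (le_add_of_nonneg_right (Real.rpow_nonneg hx.le _))

section Mellin

variable {u : ℝ → ℝ}

lemma aestronglyMeasurable_rpow_mul (hu : AEStronglyMeasurable u (volume.restrict (Ioi 0)))
    (σ : ℝ) : AEStronglyMeasurable (fun x => x ^ (σ - 1) * u x) (volume.restrict (Ioi 0)) :=
  ((continuousOn_id.rpow_const fun _ hx => Or.inl (ne_of_gt hx)).aestronglyMeasurable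
    measurableSet_Ioi).mul hu

lemma integrableOn_rpow_mul (hu : AEStronglyMeasurable u (volume.restrict (Ioi 0))) {σ : ℝ}
    (hi : IntegrableOn (fun x => x ^ (σ - 1) * |u x|) (Ioi 0)) :
    IntegrableOn (fun x => x ^ (σ - 1) * u x) (Ioi 0) := by
  refine hi.mono' (aestronglyMeasurable_rpow_mul hu σ) ?_
  filter_upwards [ae_restrict_mem measurableSet_Ioi] with x hx
  rw [norm_mul, Real.norm_eq_abs, Real.norm_eq_abs, abs_of_nonneg (Real.rpow_nonneg hx.le _)]

lemma eval_mul_mul_rpow_eq_sum {Q : ℝ[X]} {d : ℕ} (hQ : Q.degree < d) {x : ℝ} (hx : 0 < x)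
    (s : ℝ) :
    Q.eval x * u x * x ^ (s - 1) = ∑ k ∈ range d, Q.coeff k * (x ^ (s + k - 1) * u x) := by
  rw [eval_eq_sum_range_of_degree_lt hQ, sum_mul, sum_mul]
  refine sum_congr rfl fun k _ => ?_
  rw [add_sub_right_comm, Real.rpow_add hx, Real.rpow_natCast]
  ring

variable (hu : AEStronglyMeasurable u (volume.restrict (Ioi 0)))
  (hi : ∀ σ : ℝ, 0 < σ → IntegrableOn (fun x => x ^ (σ - 1) * |u x|) (Ioi 0))
include hu hi

lemma continuousOn_setIntegral_rpow_mul :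
    ContinuousOn (fun s : ℝ => ∫ x in Ioi 0, x ^ (s - 1) * u x) (Ioi 0) := by
  intro s₀ hs₀
  refine ContinuousAt.continuousWithinAt (continuousAt_of_dominated
    (bound := fun x => x ^ (s₀ / 2 - 1) * |u x| + x ^ (s₀ + 1 - 1) * |u x|)
    (.of_forall fun s => aestronglyMeasurable_rpow_mul hu s) ?_
    ((hi _ (half_pos hs₀)).add (hi _ (by linarith [mem_Ioi.1 hs₀]))) ?_)
  · filter_upwards [Icc_mem_nhds (half_lt_self hs₀) (lt_add_one s₀)] with s hs
    filter_upwards [ae_restrict_mem measurableSet_Ioi] with x hx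
    rw [norm_mul, Real.norm_eq_abs, abs_of_nonneg (Real.rpow_nonneg hx.le _), ← add_mul]
    exact mul_le_mul_of_nonneg_right
      (Real.rpow_le_rpow_add_rpow hx (by linarith [hs.1]) (by linarith [hs.2])) (abs_nonneg _)
  · filter_upwards [ae_restrict_mem measurableSet_Ioi] with x hx
    exact ((Real.continuousAt_const_rpow hx.ne').comp
      (continuousAt_id.sub continuousAt_const)).mul continuousAt_const

lemma integrableOn_eval_mul_mul_rpow (Q : ℝ[X]) {s : ℝ} (hs : 0 < s) :
    IntegrableOn (fun x => Q.eval x * u x * x ^ (s - 1)) (Ioi 0) := by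
  have hQ : Q.degree < ↑(Q.natDegree + 1) :=
    degree_le_natDegree.trans_lt (WithBot.coe_lt_coe.2 (Nat.lt_succ_self _))
  refine IntegrableOn.congr_fun (integrable_finsetSum _ fun (k : ℕ) _ =>
    ((integrableOn_rpow_mul hu (hi (s + k) (by positivity))).const_mul (Q.coeff k)))
    (fun x hx => (eval_mul_mul_rpow_eq_sum hQ hx s).symm) measurableSet_Ioi

lemma setIntegral_eval_mul_mul_rpow {Q : ℝ[X]} {d : ℕ} (hQ : Q.degree < d) {s : ℝ}
    (hs : 0 < s) :
    ∫ x in Ioi 0, Q.eval x * u x * x ^ (s - 1)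
      = ∑ k ∈ range d, Q.coeff k * ∫ x in Ioi 0, x ^ (s + k - 1) * u x := by
  rw [setIntegral_congr_fun measurableSet_Ioi fun x hx => eval_mul_mul_rpow_eq_sum hQ hx s,
    integral_finsetSum _ fun (k : ℕ) _ =>
      (integrableOn_rpow_mul hu (hi (s + k) (by positivity))).const_mul (Q.coeff k)]
  simp_rw [integral_const_mul]

end Mellin

section MellinSum

variable {J : Type*} [Fintype J] {u : J → ℝ → ℝ}
  (hu : ∀ j, AEStronglyMeasurable (u j) (volume.restrict (Ioi 0)))
  (hi : ∀ j, ∀ σ : ℝ, 0 < σ → IntegrableOn (fun x => x ^ (σ - 1) * |u j x|) (Ioi 0))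
include hu hi

lemma integrableOn_sum_eval_mul_mul_rpow (Q : J → ℝ[X]) {s : ℝ} (hs : 0 < s) :
    IntegrableOn (fun x => (∑ j, (Q j).eval x * u j x) * x ^ (s - 1)) (Ioi 0) := by
  simp_rw [sum_mul]
  exact integrable_finsetSum _ fun j _ => integrableOn_eval_mul_mul_rpow (hu j) (hi j) (Q j) hs

lemma setIntegral_sum_eval_mul_mul_rpow (Q : J → ℝ[X]) {s : ℝ} (hs : 0 < s) :
    ∫ x in Ioi 0, (∑ j, (Q j).eval x * u j x) * x ^ (s - 1)
      = ∑ j, ∫ x in Ioi 0, (Q j).eval x * u j x * x ^ (s - 1) := by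
  simp_rw [sum_mul]
  exact integral_finsetSum _ fun j _ => integrableOn_eval_mul_mul_rpow (hu j) (hi j) (Q j) hs

end MellinSum

lemma Real.Gamma_add_nat_eq_eval_ascPochhammer_mul {x : ℝ} (hx : 0 < x) (k : ℕ) :
    Real.Gamma (x + k) = (ascPochhammer ℝ k).eval x * Real.Gamma x := by
  induction k with
  | zero => simp
  | succ k ih =>
    rw [Nat.cast_succ, ← add_assoc, Real.Gamma_add_one (by positivity), ih,
      ascPochhammer_succ_eval]
    ring

section GammaRatio

variable {ι κ : Type*} [Fintype ι] [Fintype κ] {a : ι → ℝ} {b : κ → ℝ} {s : ℝ}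

-- The Mellin transform of `w_j` is `gammaRatio a b (Pi.single j 1)`, that of `v_i` is
-- `gammaRatio a b 0` times `(s - 1) ^ i`.
noncomputable def gammaRatio (a : ι → ℝ) (b : κ → ℝ) (c : κ → ℕ) (s : ℝ) : ℝ :=
  (∏ i, Real.Gamma (s + a i)) / ∏ l, Real.Gamma (s + b l + c l)

lemma gammaRatio_pos (ha : ∀ i, 0 < s + a i) (hb : ∀ l, 0 < s + b l) (c : κ → ℕ) :
    0 < gammaRatio a b c s :=
  div_pos (prod_pos fun i _ => Real.Gamma_pos_of_pos (ha i))
    (prod_pos fun l _ =>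
      Real.Gamma_pos_of_pos (add_pos_of_pos_of_nonneg (hb l) (Nat.cast_nonneg _)))

lemma continuousAt_gammaRatio (ha : ∀ i, 0 < s + a i) (hb : ∀ l, 0 < s + b l) (c : κ → ℕ) :
    ContinuousAt (gammaRatio a b c) s := by
  have hΓ : ∀ d : ℝ, 0 < s + d → ContinuousAt (fun t => Real.Gamma (t + d)) s := fun d hd =>
    ContinuousAt.comp (g := Real.Gamma)
      (Real.differentiableAt_Gamma fun m => ((neg_nonpos.2 (Nat.cast_nonneg m)).trans_lt hd).ne'
        ).continuousAt (continuousAt_id.add continuousAt_const)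
  have hb' : ∀ l, 0 < s + (b l + c l) := fun l => by
    rw [← add_assoc]; exact add_pos_of_pos_of_nonneg (hb l) (Nat.cast_nonneg _)
  refine ContinuousAt.div (tendsto_finsetProd _ fun i _ => hΓ _ (ha i))
    (tendsto_finsetProd _ fun l _ => by simpa only [add_assoc] using (hΓ _ (hb' l)).tendsto) ?_
  exact prod_ne_zero_iff.2 fun l _ =>
    (Real.Gamma_pos_of_pos (by simpa only [add_assoc] using hb' l)).ne'

noncomputable def gammaRatioShiftPoly (a : ι → ℝ) (b : κ → ℝ) (c n : κ → ℕ) (k : ℕ) :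
    ℝ[X] :=
  (∏ i, (ascPochhammer ℝ k).comp (X + C (a i))) *
    ∏ l, (ascPochhammer ℝ (n l - (k + c l))).comp (X + C (b l + (k + c l : ℕ)))

lemma natDegree_gammaRatioShiftPoly_le (a : ι → ℝ) (b : κ → ℝ) (c n : κ → ℕ) (k : ℕ) :
    (gammaRatioShiftPoly a b c n k).natDegree
      ≤ Fintype.card ι * k + ∑ l, (n l - (k + c l)) := by
  have hcomp : ∀ (j : ℕ) (d : ℝ), ((ascPochhammer ℝ j).comp (X + C d)).natDegree = j := by
    intro j d
    rw [natDegree_comp, ascPochhammer_natDegree, natDegree_X_add_C, mul_one]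
  refine natDegree_mul_le.trans (add_le_add ?_ ?_)
  · exact (natDegree_prod_le _ _).trans (by simp [hcomp, mul_comm])
  · exact (natDegree_prod_le _ _).trans (sum_le_sum fun l _ => (hcomp _ _).le)

lemma gammaRatio_add_nat (ha : ∀ i, 0 < s + a i) (hb : ∀ l, 0 < s + b l) {c n : κ → ℕ}
    {k : ℕ} (hcn : ∀ l, k + c l ≤ n l) :
    gammaRatio a b c (s + k) = gammaRatio a b n s * (gammaRatioShiftPoly a b c n k).eval s := by
  have hb' : ∀ l, 0 < s + b l + (k + c l : ℕ) :=
    fun l => add_pos_of_pos_of_nonneg (hb l) (Nat.cast_nonneg _)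
  have hnum : ∀ i, Real.Gamma (s + k + a i)
      = (ascPochhammer ℝ k).eval (s + a i) * Real.Gamma (s + a i) := fun i => by
    rw [add_right_comm, Real.Gamma_add_nat_eq_eval_ascPochhammer_mul (ha i)]
  have hden : ∀ l, Real.Gamma (s + b l + n l)
      = (ascPochhammer ℝ (n l - (k + c l))).eval (s + b l + (k + c l : ℕ))
        * Real.Gamma (s + k + b l + c l) := fun l => by
    rw [← Nat.add_sub_cancel' (hcn l), Nat.cast_add _ (n l - (k + c l)), ← add_assoc,
      Real.Gamma_add_nat_eq_eval_ascPochhammer_mul (hb' l), Nat.add_sub_cancel' (hcn l)]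
    push_cast
    ring_nf
  simp only [gammaRatio, gammaRatioShiftPoly, eval_mul, eval_prod, eval_comp, eval_add, eval_X,
    eval_C, ← add_assoc]
  rw [prod_congr rfl fun i _ => hnum i, prod_congr rfl fun l _ => hden l, prod_mul_distrib,
    prod_mul_distrib]
  have hΓ : (∏ l, Real.Gamma (s + k + b l + c l)) ≠ 0 := prod_ne_zero_iff.2 fun l _ =>
    (Real.Gamma_pos_of_pos (by simpa [add_right_comm, add_assoc] using hb' l)).ne'
  have hP : (∏ l, (ascPochhammer ℝ (n l - (k + c l))).eval (s + b l + (k + c l : ℕ))) ≠ 0 :=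
    prod_ne_zero_iff.2 fun l _ => (ascPochhammer_pos _ _ (hb' l)).ne'
  field_simp

end GammaRatio

section Weight

variable {ι κ : Type*} [Fintype ι] [Fintype κ] {a : ι → ℝ} {b : κ → ℝ} {u : ℝ → ℝ}
  (hu : AEStronglyMeasurable u (volume.restrict (Ioi 0)))
  (hi : ∀ σ : ℝ, 0 < σ → IntegrableOn (fun x => x ^ (σ - 1) * |u x|) (Ioi 0))
  (ha : ∀ i, -1 < a i) (hb : ∀ l, -1 < b l) {c : κ → ℕ} {e : ℕ}
  (hmellin : ∀ s : ℝ, 1 < s →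
    ∫ x in Ioi 0, x ^ (s - 1) * u x = gammaRatio a b c s * (s - 1) ^ e)
include hu hi ha hb hmellin

-- The orthogonality relation for `k = 0` is the Mellin transform at `s = 1`, on the boundary of
-- the range of `hmellin`; both sides are continuous there.
lemma setIntegral_rpow_mul_eq_of_one_le {s : ℝ} (hs : 1 ≤ s) :
    ∫ x in Ioi 0, x ^ (s - 1) * u x = gammaRatio a b c s * (s - 1) ^ e :=
  EqOn.of_subset_closure (t := Ici 1) hmellin
    ((continuousOn_setIntegral_rpow_mul hu hi).mono fun _ ht => zero_lt_one.trans_le ht)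
    (continuousOn_of_forall_continuousAt fun t (ht : 1 ≤ t) =>
      (continuousAt_gammaRatio (fun i => by linarith [ha i]) (fun l => by linarith [hb l]) c).mul
        ((continuousAt_id.sub continuousAt_const).pow e))
    Ioi_subset_Ici_self (closure_Ioi 1).ge hs

lemma exists_mem_degreeLE_setIntegral_eval_mul_mul_rpow_eq {n : κ → ℕ} {Q : ℝ[X]} {d : ℕ}
    (hQ : Q.degree < d) (hcn : ∀ k < d, ∀ l, k + c l ≤ n l) {D : ℕ}
    (hD : ∀ k < d, Fintype.card ι * k + ∑ l, (n l - (k + c l)) + e ≤ D) :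
    ∃ P ∈ degreeLE ℝ D, ∀ s, 1 ≤ s →
      ∫ x in Ioi 0, Q.eval x * u x * x ^ (s - 1) = gammaRatio a b n s * P.eval s := by
  refine ⟨∑ k ∈ range d,
      C (Q.coeff k) * (gammaRatioShiftPoly a b c n k * (X + C ((k : ℝ) - 1)) ^ e),
    Submodule.sum_mem _ fun k hk => ?_, fun s hs => ?_⟩
  · rw [mem_degreeLE, ← natDegree_le_iff_degree_le]
    refine (natDegree_C_mul_le _ _).trans <| natDegree_mul_le.trans <|
      le_trans ?_ (hD k (mem_range.1 hk))
    exact add_le_add (natDegree_gammaRatioShiftPoly_le a b c n k)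
      (natDegree_pow_le.trans (by rw [natDegree_X_add_C, mul_one]))
  · rw [setIntegral_eval_mul_mul_rpow hu hi hQ (by linarith), eval_finsetSum, mul_sum]
    refine sum_congr rfl fun k hk => ?_
    rw [setIntegral_rpow_mul_eq_of_one_le hu hi ha hb hmellin
        (by linarith [k.cast_nonneg (α := ℝ)]),
      gammaRatio_add_nat (fun i => by linarith [ha i]) (fun l => by linarith [hb l])
        (hcn k (mem_range.1 hk))]
    simp only [eval_mul, eval_C, eval_pow, eval_add, eval_X]
    ring

end Weight

-- After `s ↦ 1 - s` the roots `1, …, d` become the roots `0, -1, …, 1 - d` of the monic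
-- polynomial `ascPochhammer ℝ d`.
lemma Polynomial.exists_eval_eq_mul_ascPochhammer_one_sub {P : ℝ[X]} {d : ℕ}
    (hP : P ∈ degreeLE ℝ d) (hroots : ∀ t ∈ Finset.Icc 1 d, P.eval (t : ℝ) = 0) :
    ∃ c : ℝ, ∀ s, P.eval s = c * (ascPochhammer ℝ d).eval (1 - s) := by
  set P' := P.comp (1 - X)
  have hP' : P'.natDegree ≤ d := by
    refine natDegree_comp_le.trans ?_
    rw [mem_degreeLE, ← natDegree_le_iff_degree_le] at hP
    have : (1 - X : ℝ[X]).natDegree ≤ 1 := (natDegree_sub_le _ _).trans (by simp)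
    nlinarith
  have hasc : (ascPochhammer ℝ d).natDegree = d := ascPochhammer_natDegree ℝ d
  have key : P' = C (P'.coeff d) * ascPochhammer ℝ d := by
    refine eq_of_degree_sub_lt_of_eval_finset_eq ((range d).image fun i : ℕ => -(i : ℝ)) ?_ ?_
    · rw [Finset.card_image_of_injective _ fun i j h => by simpa using h, card_range,
        degree_lt_iff_coeff_zero]
      intro j hj
      rcases hj.eq_or_lt with rfl | hlt
      · have := (monic_ascPochhammer ℝ d).coeff_natDegree
        rw [hasc] at this
        simp [this]
      · rw [coeff_sub, coeff_C_mul, coeff_eq_zero_of_natDegree_lt (hP'.trans_lt hlt),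
          coeff_eq_zero_of_natDegree_lt (hasc.trans_lt hlt), mul_zero, sub_zero]
    · intro x hx
      obtain ⟨i, hi, rfl⟩ := mem_image.1 hx
      have := hroots (i + 1) (by simpa using hi)
      simp only [P', eval_comp, eval_sub, eval_one, eval_X, eval_mul, eval_C,
        ascPochhammer_eval_neg_coe_nat_of_lt (mem_range.1 hi), mul_zero]
      simpa [add_comm] using this
  refine ⟨P'.coeff d, fun s => ?_⟩
  simpa [P', eval_comp] using congrArg (eval (1 - s)) key

lemma mul_add_succ_le_sum_of_stepLine {r : ℕ} {m : Fin r → ℕ}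
    (hm : ∀ i j : Fin r, i ≤ j → m j ≤ m i ∧ m i ≤ m j + 1) {i : Fin r} {k : ℕ}
    (hk : k < m i) : r * k + (i + 1) ≤ ∑ j, m j :=
  calc r * k + (i + 1) = ∑ j, (k + if j ≤ i then 1 else 0) := by
        simp [sum_add_distrib, filter_ge_eq_Iic]
    _ ≤ ∑ j, m j := sum_le_sum fun j _ => by
        split_ifs with h
        · have := hm j i h; omega
        · have := hm i j (le_of_not_ge h); omega

lemma add_single_le_of_abs_sub_le {κ : Type*} [DecidableEq κ] {n : κ → ℕ}
    (hn : ∀ i j, |(n i : ℤ) - n j| ≤ 1) {j : κ} {k : ℕ} (hk : k < n j) (l : κ) :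
    k + (Pi.single j 1 : κ → ℕ) l ≤ n l := by
  have := abs_le.1 (hn l j)
  rcases eq_or_ne l j with rfl | h
  · rw [Pi.single_eq_same]; omega
  · rw [Pi.single_eq_of_ne h]; omega

-- The left-hand side bounds the degree of the `k`-th term of the polynomial attached to `A_j w_j`.
lemma mul_add_sum_tsub_single_le {p q : ℕ} {n : Fin q → ℕ} {m : Fin (p - q) → ℕ}
    (hn : ∀ i j, |(n i : ℤ) - n j| ≤ 1) (hnm : ∀ i j, |(n i : ℤ) - m j| ≤ 1) {j : Fin q}
    {k : ℕ} (hk : k < n j) :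
    p * k + ∑ l, (n l - (k + (Pi.single j 1 : Fin q → ℕ) l)) ≤ ∑ l, n l + ∑ i, m i - 1 := by
  have hsum : ∑ l, (n l - (k + (Pi.single j 1 : Fin q → ℕ) l)) + (q * k + 1) = ∑ l, n l := by
    have : ∑ l, (k + (Pi.single j 1 : Fin q → ℕ) l) = q * k + 1 := by simp [sum_add_distrib]
    rw [← this, ← sum_add_distrib]
    exact sum_congr rfl fun l _ => Nat.sub_add_cancel (add_single_le_of_abs_sub_le hn hk l)
  have hm : (p - q) * k ≤ ∑ i, m i := by
    simpa using card_nsmul_le_sum univ m k fun i _ => by have := abs_le.1 (hnm j i); omega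
  have hp : p * k ≤ (q + (p - q)) * k := Nat.mul_le_mul_right k le_add_tsub
  rw [add_mul] at hp
  omega

-- The left-hand side bounds the degree of the `k`-th term of the polynomial attached to `B_i v_i`.
lemma mul_add_sum_tsub_add_le {p q : ℕ} {n : Fin q → ℕ} {m : Fin (p - q) → ℕ}
    (hnm : ∀ i j, |(n i : ℤ) - m j| ≤ 1)
    (hm : ∀ i j : Fin (p - q), i ≤ j → m j ≤ m i ∧ m i ≤ m j + 1) {i : Fin (p - q)} {k : ℕ}
    (hk : k < m i) : p * k + ∑ l, (n l - k) + i ≤ ∑ l, n l + ∑ i, m i - 1 := by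
  have hsum : ∑ l, (n l - k) + q * k = ∑ l, n l := by
    have : ∑ _l : Fin q, k = q * k := by simp
    rw [← this, ← sum_add_distrib]
    exact sum_congr rfl fun l _ => Nat.sub_add_cancel (by have := abs_le.1 (hnm l i); omega)
  have hm := mul_add_succ_le_sum_of_stepLine hm hk
  have hp : p * k ≤ (q + (p - q)) * k := Nat.mul_le_mul_right k le_add_tsub
  rw [add_mul] at hp
  omega

lemma exists_setIntegral_mul_rpow_eq_of_orthogonal {ι κ : Type*} [Fintype ι] [Fintype κ]
    {a : ι → ℝ} {b : κ → ℝ} {n : κ → ℕ} {F : ℝ → ℝ} {P : ℝ[X]} {N : ℕ}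
    (ha : ∀ i, -1 < a i) (hb : ∀ l, -1 < b l) (hP : P ∈ degreeLE ℝ ↑(N - 1))
    (hF : ∀ s : ℝ, 1 ≤ s →
      ∫ x in Ioi 0, F x * x ^ (s - 1) = gammaRatio a b n s * P.eval s)
    (horth : ∀ k : ℕ, k + 2 ≤ N → ∫ x in Ioi 0, F x * x ^ k = 0) :
    ∃ c : ℝ, ∀ s : ℝ, 1 ≤ s → ∫ x in Ioi 0, F x * x ^ (s - 1)
      = c * gammaRatio a b n s * (ascPochhammer ℝ (N - 1)).eval (1 - s) := by
  have hroots : ∀ t ∈ Finset.Icc 1 (N - 1), P.eval (t : ℝ) = 0 := by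
    intro t ht
    obtain ⟨h1, h2⟩ := Finset.mem_Icc.1 ht
    have ht1 : (1 : ℝ) ≤ t := Nat.one_le_cast.2 h1
    have hG : 0 < gammaRatio a b n t :=
      gammaRatio_pos (fun i => by linarith [ha i]) (fun l => by linarith [hb l]) n
    refine (mul_eq_zero.1 ((hF t ht1).symm.trans ((setIntegral_congr_fun measurableSet_Ioi
      fun x _ => ?_).trans (horth (t - 1) (by omega))))).resolve_left hG.ne'
    rw [← Real.rpow_natCast, Nat.cast_sub h1, Nat.cast_one]
  obtain ⟨c, hc⟩ := exists_eval_eq_mul_ascPochhammer_one_sub hP hroots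
  exact ⟨c, fun s hs => by rw [hF s hs, hc]; ring⟩

theorem stmt_10_general
    (p q : ℕ)
    (a : Fin p → ℝ) (b : Fin q → ℝ)
    (ha : ∀ i, -1 < a i) (hb : ∀ i, -1 < b i)
    (w : Fin q → ℝ → ℝ) (v : Fin (p - q) → ℝ → ℝ)
    (hw_cont : ∀ j, ContinuousOn (w j) (Set.Ioi 0))
    (hv_cont : ∀ i, ContinuousOn (v i) (Set.Ioi 0))
    (hw_int : ∀ j, ∀ σ : ℝ, 0 < σ →
      IntegrableOn (fun x : ℝ => x ^ (σ - 1) * |w j x|) (Set.Ioi 0))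
    (hv_int : ∀ i, ∀ σ : ℝ, 0 < σ →
      IntegrableOn (fun x : ℝ => x ^ (σ - 1) * |v i x|) (Set.Ioi 0))
    (hw_mellin : ∀ j, ∀ s : ℝ, 1 < s →
      ∫ x in Set.Ioi (0:ℝ), x ^ (s - 1) * w j x
        = (∏ i, Real.Gamma (s + a i)) /
          (∏ i, Real.Gamma (s + b i + if i = j then 1 else 0)))
    (hv_mellin : ∀ i, ∀ s : ℝ, 1 < s →
      ∫ x in Set.Ioi (0:ℝ), x ^ (s - 1) * v i x
        = (∏ i', Real.Gamma (s + a i')) / (∏ i', Real.Gamma (s + b i')) *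
            (s - 1) ^ (i : ℕ))
    (n : Fin q → ℕ) (m : Fin (p - q) → ℕ)
    (hnd1 : ∀ i j, |(n i : ℤ) - (n j : ℤ)| ≤ 1)
    (hnd3 : ∀ i j, |(n i : ℤ) - (m j : ℤ)| ≤ 1)
    (hmstep : ∀ i j : Fin (p - q), i ≤ j → m j ≤ m i ∧ m i ≤ m j + 1)
    (N : ℕ) (hN : N = ∑ j, n j + ∑ j, m j)
    (A : Fin q → Polynomial ℝ) (B : Fin (p - q) → Polynomial ℝ)
    (hA : ∀ j, (A j).degree < (n j : WithBot ℕ))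
    (hB : ∀ j, (B j).degree < (m j : WithBot ℕ))
    (horth : ∀ k : ℕ, k + 2 ≤ N →
      ∫ x in Set.Ioi (0:ℝ),
        (∑ j, (A j).eval x * w j x + ∑ j, (B j).eval x * v j x) * x ^ (k : ℕ) = 0) :
    ∃ c : ℝ, ∀ s : ℝ, 1 < s →
      ∫ x in Set.Ioi (0:ℝ),
          (∑ j, (A j).eval x * w j x + ∑ j, (B j).eval x * v j x) * x ^ (s - 1)
        = c * ((∏ i, Real.Gamma (s + a i)) / (∏ i, Real.Gamma (s + b i + n i))) *
            (ascPochhammer ℝ (N - 1)).eval (1 - s) := by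
  have hw_meas := fun j => (hw_cont j).aestronglyMeasurable (μ := volume) measurableSet_Ioi
  have hv_meas := fun i => (hv_cont i).aestronglyMeasurable (μ := volume) measurableSet_Ioi
  have hw : ∀ j, ∃ P ∈ degreeLE ℝ ↑(N - 1), ∀ s, 1 ≤ s →
      ∫ x in Ioi 0, (A j).eval x * w j x * x ^ (s - 1) = gammaRatio a b n s * P.eval s :=
    fun j => exists_mem_degreeLE_setIntegral_eval_mul_mul_rpow_eq (hw_meas j) (hw_int j) ha hb
      (c := Pi.single j 1) (e := 0)
      (fun s hs => by rw [hw_mellin j s hs]; simp [gammaRatio, Pi.single_apply]) (hA j)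
      (fun k hk => add_single_le_of_abs_sub_le hnd1 hk)
      (fun k hk => by simpa [hN] using mul_add_sum_tsub_single_le hnd1 hnd3 hk)
  have hv : ∀ i, ∃ P ∈ degreeLE ℝ ↑(N - 1), ∀ s, 1 ≤ s →
      ∫ x in Ioi 0, (B i).eval x * v i x * x ^ (s - 1) = gammaRatio a b n s * P.eval s :=
    fun i => exists_mem_degreeLE_setIntegral_eval_mul_mul_rpow_eq (hv_meas i) (hv_int i) ha hb
      (c := 0) (e := i) (fun s hs => by rw [hv_mellin i s hs]; simp [gammaRatio]) (hB i)
      (fun k hk l => by have := abs_le.1 (hnd3 l i); simp only [Pi.zero_apply]; omega)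
      (fun k hk => by simpa [hN] using mul_add_sum_tsub_add_le hnd3 hmstep hk)
  choose PW hPW_deg hPW using hw
  choose PV hPV_deg hPV using hv
  have hF : ∀ s : ℝ, 1 ≤ s → ∫ x in Ioi 0,
      (∑ j, (A j).eval x * w j x + ∑ j, (B j).eval x * v j x) * x ^ (s - 1)
        = gammaRatio a b n s * (∑ j, PW j + ∑ i, PV i).eval s := fun s hs => by
    simp_rw [add_mul]
    rw [integral_add (integrableOn_sum_eval_mul_mul_rpow hw_meas hw_int A (by linarith))
      (integrableOn_sum_eval_mul_mul_rpow hv_meas hv_int B (by linarith)),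
      setIntegral_sum_eval_mul_mul_rpow hw_meas hw_int A (by linarith),
      setIntegral_sum_eval_mul_mul_rpow hv_meas hv_int B (by linarith)]
    simp only [hPW _ s hs, hPV _ s hs, eval_add, eval_finsetSum, mul_add, mul_sum]
  obtain ⟨c, hc⟩ := exists_setIntegral_mul_rpow_eq_of_orthogonal ha hb
    (add_mem (sum_mem fun j _ => hPW_deg j) (sum_mem fun i _ => hPV_deg i)) hF horth
  exact ⟨c, fun s hs => hc s hs.le⟩

/-- In the Laguerre-like setting, the Mellin transform of a type I function
(a polynomial combination of the weights satisfying the type I orthogonality conditions)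
equals `c · Γ(s+a)/Γ(s+b+n) · (1-s)_{N-1}` for some constant `c`, where `N = |n| + |m|`. -/
theorem stmt_10
    (p q : ℕ) (hpq : q < p)
    (a : Fin p → ℝ) (b : Fin q → ℝ)
    (ha : ∀ i, -1 < a i) (hb : ∀ i, -1 < b i)
    (hab : ∀ j : Fin q, a (Fin.castLE hpq.le j) < b j)
    (w : Fin q → ℝ → ℝ) (v : Fin (p - q) → ℝ → ℝ)
    (hw_cont : ∀ j, ContinuousOn (w j) (Set.Ioi 0))
    (hv_cont : ∀ i, ContinuousOn (v i) (Set.Ioi 0))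
    (hw_int : ∀ j, ∀ σ : ℝ, 0 < σ →
      IntegrableOn (fun x : ℝ => x ^ (σ - 1) * |w j x|) (Set.Ioi 0))
    (hv_int : ∀ i, ∀ σ : ℝ, 0 < σ →
      IntegrableOn (fun x : ℝ => x ^ (σ - 1) * |v i x|) (Set.Ioi 0))
    (hw_mellin : ∀ j, ∀ s : ℝ, 1 < s →
      ∫ x in Set.Ioi (0:ℝ), x ^ (s - 1) * w j x
        = (∏ i, Real.Gamma (s + a i)) /
          (∏ i, Real.Gamma (s + b i + if i = j then 1 else 0)))
    (hv_mellin : ∀ i, ∀ s : ℝ, 1 < s →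
      ∫ x in Set.Ioi (0:ℝ), x ^ (s - 1) * v i x
        = (∏ i', Real.Gamma (s + a i')) / (∏ i', Real.Gamma (s + b i')) *
            (s - 1) ^ (i : ℕ))
    (n : Fin q → ℕ) (m : Fin (p - q) → ℕ)
    (hnd1 : ∀ i j, |(n i : ℤ) - (n j : ℤ)| ≤ 1)
    (hnd2 : ∀ i j, |(m i : ℤ) - (m j : ℤ)| ≤ 1)
    (hnd3 : ∀ i j, |(n i : ℤ) - (m j : ℤ)| ≤ 1)
    (hmstep : ∀ i j : Fin (p - q), i ≤ j → m j ≤ m i ∧ m i ≤ m j + 1)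
    (N : ℕ) (hN : N = ∑ j, n j + ∑ j, m j)
    (A : Fin q → Polynomial ℝ) (B : Fin (p - q) → Polynomial ℝ)
    (hA : ∀ j, (A j).degree < (n j : WithBot ℕ))
    (hB : ∀ j, (B j).degree < (m j : WithBot ℕ))
    (horth : ∀ k : ℕ, k + 2 ≤ N →
      ∫ x in Set.Ioi (0:ℝ),
        (∑ j, (A j).eval x * w j x + ∑ j, (B j).eval x * v j x) * x ^ (k : ℕ) = 0) :
    ∃ c : ℝ, ∀ s : ℝ, 1 < s →
      ∫ x in Set.Ioi (0:ℝ),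
          (∑ j, (A j).eval x * w j x + ∑ j, (B j).eval x * v j x) * x ^ (s - 1)
        = c * ((∏ i, Real.Gamma (s + a i)) / (∏ i, Real.Gamma (s + b i + n i))) *
            (ascPochhammer ℝ (N - 1)).eval (1 - s) :=
  stmt_10_general p q a b ha hb w v hw_cont hv_cont hw_int hv_int hw_mellin hv_mellin n m hnd1 hnd3
    hmstep N hN A B hA hB horth
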